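/- arXiv:math/9604221 — 4 statements merged into one kernel-verified Lean document; each statement's English description precedes it below -/
import Mathlib

section
/- Let λ: ℝ → ℂⁿ be a proper C^∞ embedding. Then there exists a continuous function η: ℝ → (0, ∞) such that every map γ: ℝ → ℂⁿ of class C¹ satisfying |γ^(s)(t) − λ^(s)(t)| < η(t) for all t ∈ ℝ and s = 0, 1 is itself a proper embedding. -/
/-!
Choose `η t` at most `1`, at most `‖λ' t‖`, at most half the distance from `λ t` to
`λ {s | |s - t| ≥ 1}`, and at most half of every secant slope `‖λ b - λ a‖ / |b - a|` with `a, b`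
within `1` of `t`. Properness and injectivity of `λ`, together with `λ' ≠ 0` and the continuous
extension of the secant slopes to the diagonal, make each of these bounds locally bounded below by
a positive constant, so a partition of unity glues them into a continuous `η > 0`.

For `γ` that is `η`-close to `λ` in `C¹`, `γ` stays within `1` of `λ`, hence is proper, and
`γ' ≠ 0`. Points with `|s - t| ≥ 1` have images under `λ` at distance `≥ η s + η t`, so
`γ s ≠ γ t`; for `|s - t| ≤ 1` the mean value inequality for `γ - λ`, whose derivative is below
half the secant slope of `λ` on `[s, t]`, gives the same conclusion.
-/

open Metric Set Filter Topology intervalIntegral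

section SecantSlope

variable {E : Type*} [NormedAddCommGroup E] [NormedSpace ℝ E] {f : ℝ → E}

/-- The difference quotient of `f` between `p.1` and `p.2`, written as the mean of `f'` over the
segment so that it extends continuously to the diagonal, where it equals `f'`. -/
noncomputable def secantSlope (f : ℝ → E) (p : ℝ × ℝ) : E :=
  ∫ u in (0 : ℝ)..1, deriv f (p.1 + u • (p.2 - p.1))

theorem continuous_secantSlope (hf : ContDiff ℝ 1 f) : Continuous (secantSlope f) := by
  have := hf.continuous_deriv le_rfl
  exact continuous_parametric_intervalIntegral_of_continuous' (by fun_prop) 0 1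

variable [CompleteSpace E]

theorem secantSlope_diag (x : ℝ) : secantSlope f (x, x) = deriv f x := by
  simp [secantSlope]

theorem sub_smul_secantSlope (hf : ContDiff ℝ 1 f) (p : ℝ × ℝ) :
    (p.2 - p.1) • secantSlope f p = f p.2 - f p.1 := by
  have h := integral_unitInterval_deriv_eq_sub (f := f) (z₀ := p.1) (z₁ := p.2 - p.1)
    ((hf.continuous_deriv le_rfl).comp (by fun_prop)).continuousOn
    fun t _ => ((hf.differentiable one_ne_zero) _).hasDerivAt
  rwa [add_sub_cancel] at h

theorem secantSlope_ne_zero (hf : ContDiff ℝ 1 f) (hinj : Function.Injective f)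
    (himm : ∀ t, deriv f t ≠ 0) (p : ℝ × ℝ) : secantSlope f p ≠ 0 := by
  obtain ⟨a, b⟩ := p
  rcases eq_or_ne a b with rfl | hab
  · rw [secantSlope_diag]
    exact himm a
  · intro h0
    have h := sub_smul_secantSlope hf (a, b)
    rw [h0, smul_zero, eq_comm, sub_eq_zero] at h
    exact hab (hinj h).symm

theorem exists_pos_eventually_le_norm_secantSlope (hf : ContDiff ℝ 1 f)
    (hinj : Function.Injective f) (himm : ∀ t, deriv f t ≠ 0) (x : ℝ) :
    ∃ c > 0, ∀ᶠ y in 𝓝 x, ∀ p ∈ closedBall (y, y) 1, c ≤ ‖secantSlope f p‖ := by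
  obtain ⟨c, hc, hle⟩ := (isCompact_closedBall (x, x) 2).exists_forall_le'
    (continuous_secantSlope hf).norm.continuousOn
    fun p _ => norm_pos_iff.2 (secantSlope_ne_zero hf hinj himm p)
  refine ⟨c, hc, ?_⟩
  filter_upwards [ball_mem_nhds x one_pos] with y hy p hp
  refine hle p (closedBall_subset_closedBall' ?_ hp)
  rw [Prod.dist_eq, max_self]
  linarith [mem_ball.1 hy]

end SecantSlope

theorem exists_continuous_pos_forall_of_eventually {X : Type*} [TopologicalSpace X]
    [NormalSpace X] [ParacompactSpace X] {P : X → ℝ → Prop}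
    (hP : ∀ x e e', 0 < e' → e' ≤ e → P x e → P x e')
    (hloc : ∀ x, ∃ c > 0, ∀ᶠ y in 𝓝 x, P y c) : ∃ η : C(X, ℝ), ∀ x, 0 < η x ∧ P x (η x) := by
  refine exists_continuous_forall_mem_convex_of_local_const (t := fun x => {e | 0 < e ∧ P x e})
    (fun x => convex_iff_ordConnected.2 ⟨fun a ha b hb e he => ?_⟩) fun x => ?_
  · exact ⟨ha.1.trans_le he.1, hP x b e (ha.1.trans_le he.1) he.2 hb.2⟩
  · obtain ⟨c, hc, hev⟩ := hloc x
    exact ⟨c, hev.mono fun y hy => ⟨hc, hy⟩⟩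

theorem IsProperMap.of_dist_le {X Y : Type*} [TopologicalSpace X] [MetricSpace Y] [ProperSpace Y]
    {f g : X → Y} (hf : IsProperMap f) (hg : Continuous g) {C : ℝ}
    (hfg : ∀ x, dist (g x) (f x) ≤ C) : IsProperMap g := by
  refine isProperMap_iff_isCompact_preimage.2 ⟨hg, fun K hK => ?_⟩
  refine (hf.isCompact_preimage (hK.cthickening (r := C))).of_isClosed_subset
    (hK.isClosed.preimage hg) fun x hx => ?_
  exact mem_cthickening_of_dist_le (f x) (g x) C K hx (by rw [dist_comm]; exact hfg x)

theorem IsProperMap.exists_pos_eventually_le_infDist {Y : Type*} [MetricSpace Y] {f : ℝ → Y}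
    (hf : IsProperMap f) (hinj : Function.Injective f) (x : ℝ) :
    ∃ c > 0, ∀ᶠ y in 𝓝 x, c ≤ infDist (f y) (f '' (ball y 1)ᶜ) := by
  set S := f '' (ball x (3 / 4))ᶜ
  have hS : IsClosed S := hf.isClosedMap _ isOpen_ball.isClosed_compl
  have hxS : f x ∉ S := fun ⟨s, hs, hsx⟩ => hs (hinj hsx ▸ mem_ball_self (by norm_num))
  have hSne : S.Nonempty := ⟨f (x + 1), x + 1, by norm_num [Real.dist_eq], rfl⟩
  set c := infDist (f x) S
  have hc : 0 < c := (hS.notMem_iff_infDist_pos hSne).1 hxS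
  have hnear : ∀ᶠ y in 𝓝 x, dist (f y) (f x) < c / 2 :=
    (hf.continuous.tendsto x).eventually (ball_mem_nhds _ (half_pos hc))
  refine ⟨c / 2, half_pos hc, ?_⟩
  filter_upwards [hnear, ball_mem_nhds x (show (0 : ℝ) < 1 / 4 by norm_num)] with y hfy hy
  have hsub : f '' (ball y 1)ᶜ ⊆ S := image_mono <| compl_subset_compl.2 <|
    ball_subset_ball' (by rw [dist_comm]; linarith [mem_ball.1 hy])
  have hne : (f '' (ball y 1)ᶜ).Nonempty := ⟨f (y + 1), y + 1, by simp, rfl⟩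
  have := infDist_le_infDist_add_dist (x := f x) (y := f y) (s := S)
  linarith [infDist_le_infDist_of_subset (x := f y) hsub hne, dist_comm (f x) (f y)]

section Perturbation

variable {E : Type*} [NormedAddCommGroup E] [NormedSpace ℝ E]

theorem ne_of_norm_deriv_sub_le {f g : ℝ → E} (hf : Differentiable ℝ f) (hg : Differentiable ℝ g)
    {s t C : ℝ} (hst : s ≤ t) (hC : ∀ u ∈ Icc s t, ‖deriv g u - deriv f u‖ ≤ C)
    (hlt : C * (t - s) < ‖f t - f s‖) : g s ≠ g t := by
  intro heq
  have hmv := (convex_Icc s t).norm_image_sub_le_of_norm_deriv_le (f := g - f)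
    (fun u _ => (hg u).sub (hf u)) (fun u hu => by rw [deriv_sub (hg u) (hf u)]; exact hC u hu)
    (left_mem_Icc.2 hst) (right_mem_Icc.2 hst)
  rw [Pi.sub_apply, Pi.sub_apply, heq, sub_sub_sub_cancel_left, norm_sub_rev, Real.norm_eq_abs,
    abs_of_nonneg (sub_nonneg.2 hst)] at hmv
  linarith

variable [CompleteSpace E]

structure IsStabilityRadius (f : ℝ → E) (x e : ℝ) : Prop where
  le_one : e ≤ 1
  le_norm_deriv : e ≤ ‖deriv f x‖
  two_mul_le_infDist : 2 * e ≤ infDist (f x) (f '' (ball x 1)ᶜ)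
  two_mul_le_norm_secantSlope : ∀ p ∈ closedBall (x, x) 1, 2 * e ≤ ‖secantSlope f p‖

omit [CompleteSpace E] in
theorem IsStabilityRadius.mono {f : ℝ → E} {x e e' : ℝ} (h : IsStabilityRadius f x e)
    (he : e' ≤ e) : IsStabilityRadius f x e' where
  le_one := he.trans h.le_one
  le_norm_deriv := he.trans h.le_norm_deriv
  two_mul_le_infDist := by linarith [h.two_mul_le_infDist]
  two_mul_le_norm_secantSlope p hp := by linarith [h.two_mul_le_norm_secantSlope p hp]

theorem exists_continuous_isStabilityRadius {f : ℝ → E} (hf : ContDiff ℝ 1 f)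
    (hinj : Function.Injective f) (hproper : IsProperMap f) (himm : ∀ t, deriv f t ≠ 0) :
    ∃ η : C(ℝ, ℝ), ∀ x, 0 < η x ∧ IsStabilityRadius f x (η x) := by
  refine exists_continuous_pos_forall_of_eventually (fun x e e' _ he h => h.mono he) fun x => ?_
  have hderiv_pos : 0 < ‖deriv f x‖ := norm_pos_iff.2 (himm x)
  have hderiv : ∀ᶠ y in 𝓝 x, ‖deriv f x‖ / 2 ≤ ‖deriv f y‖ :=
    (hf.continuous_deriv le_rfl).norm.continuousAt.eventually
      (eventually_ge_nhds (half_lt_self hderiv_pos))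
  obtain ⟨c₁, hc₁, hsep⟩ := hproper.exists_pos_eventually_le_infDist hinj x
  obtain ⟨c₂, hc₂, hsec⟩ := exists_pos_eventually_le_norm_secantSlope hf hinj himm x
  set c := min (min 1 (‖deriv f x‖ / 2)) (min (c₁ / 2) (c₂ / 2))
  have hc : 0 < c := lt_min (lt_min one_pos (half_pos hderiv_pos)) (lt_min (half_pos hc₁)
    (half_pos hc₂))
  have hc₁' : c ≤ c₁ / 2 := (min_le_right _ _).trans (min_le_left _ _)
  have hc₂' : c ≤ c₂ / 2 := (min_le_right _ _).trans (min_le_right _ _)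
  refine ⟨c, hc, ?_⟩
  filter_upwards [hderiv, hsep, hsec] with y hy_deriv hy_sep hy_sec
  exact
    { le_one := (min_le_left _ _).trans (min_le_left _ _)
      le_norm_deriv := ((min_le_left _ _).trans (min_le_right _ _)).trans hy_deriv
      two_mul_le_infDist := by linarith
      two_mul_le_norm_secantSlope := fun p hp => by linarith [hy_sec p hp] }

theorem injective_of_isStabilityRadius {f γ : ℝ → E} {η : ℝ → ℝ} (hf : ContDiff ℝ 1 f)
    (hγ : Differentiable ℝ γ) (hη : ∀ t, IsStabilityRadius f t (η t))
    (h₀ : ∀ t, ‖γ t - f t‖ < η t) (h₁ : ∀ t, ‖deriv γ t - deriv f t‖ < η t) :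
    Function.Injective γ := by
  suffices h : ∀ s t, s < t → γ s ≠ γ t by
    intro s t heq
    by_contra hne
    rcases lt_or_gt_of_ne hne with hlt | hlt
    exacts [h s t hlt heq, h t s hlt heq.symm]
  intro s t hst
  rcases le_or_gt (t - s) 1 with hnear | hfar
  · set m := ‖secantSlope f (s, t)‖
    have hm : 0 < m := by
      linarith [(hη s).two_mul_le_norm_secantSlope (s, t) (by
        simp [Prod.dist_eq, Real.dist_eq, abs_of_pos (sub_pos.2 hst)]; linarith),
        (norm_nonneg _).trans_lt (h₀ s)]
    refine ne_of_norm_deriv_sub_le (hf.differentiable one_ne_zero) hγ hst.le (C := m / 2)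
      (fun u hu => ?_) ?_
    · have hp : (s, t) ∈ closedBall (u, u) 1 := by
        rw [mem_closedBall, Prod.dist_eq, Real.dist_eq, Real.dist_eq]
        exact max_le (abs_le.2 ⟨by linarith [hu.2], by linarith [hu.1]⟩)
          (abs_le.2 ⟨by linarith [hu.2], by linarith [hu.1]⟩)
      linarith [h₁ u, (hη u).two_mul_le_norm_secantSlope _ hp]
    · rw [← sub_smul_secantSlope hf (s, t), norm_smul, Real.norm_of_nonneg (by linarith)]
      nlinarith
  · intro heq
    have hts : t ∈ (ball s 1)ᶜ := by
      rw [mem_compl_iff, mem_ball, Real.dist_eq, not_lt]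
      exact hfar.le.trans (le_abs_self _)
    have hst' : s ∈ (ball t 1)ᶜ := by
      rw [mem_compl_iff, mem_ball, Real.dist_eq, not_lt, abs_sub_comm]
      exact hfar.le.trans (le_abs_self _)
    have hs := (hη s).two_mul_le_infDist.trans (infDist_le_dist_of_mem (mem_image_of_mem f hts))
    have ht := (hη t).two_mul_le_infDist.trans (infDist_le_dist_of_mem (mem_image_of_mem f hst'))
    linarith [dist_triangle4 (f s) (γ s) (γ t) (f t), dist_eq_zero.2 heq, h₀ s, h₀ t,
      dist_eq_norm' (f s) (γ s), dist_eq_norm (γ t) (f t), dist_comm (f s) (f t)]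

end Perturbation

/-- **Stability of proper embeddings under `C¹`-small perturbations.**
Let `λ : ℝ → ℂⁿ` be a proper `C^∞` embedding.  Then there is a continuous function
`η : ℝ → (0, ∞)` such that every `C¹` map `γ : ℝ → ℂⁿ` with
`|γ⁽ˢ⁾(t) − λ⁽ˢ⁾(t)| < η(t)` for all `t ∈ ℝ` and `s = 0, 1` is itself a proper embedding. -/
theorem proper_embedding_stability
    (n : ℕ)
    (lam : ℝ → EuclideanSpace ℂ (Fin n))
    (hlam_smooth : ContDiff ℝ (⊤ : ℕ∞) lam)
    (hlam_inj : Function.Injective lam)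
    (hlam_proper : IsProperMap lam)
    (hlam_imm : ∀ t : ℝ, deriv lam t ≠ 0) :
    ∃ η : ℝ → ℝ, Continuous η ∧ (∀ t, 0 < η t) ∧
      ∀ γ : ℝ → EuclideanSpace ℂ (Fin n), ContDiff ℝ 1 γ →
        (∀ t : ℝ, ∀ s : ℕ, s ≤ 1 → ‖iteratedDeriv s γ t - iteratedDeriv s lam t‖ < η t) →
        Function.Injective γ ∧ IsProperMap γ ∧ ∀ t : ℝ, deriv γ t ≠ 0 := by
  have hlam : ContDiff ℝ 1 lam := hlam_smooth.of_le (by exact_mod_cast le_top)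
  obtain ⟨η, hη⟩ := exists_continuous_isStabilityRadius hlam hlam_inj hlam_proper hlam_imm
  refine ⟨η, η.continuous, fun t => (hη t).1, fun γ hγ hclose => ?_⟩
  have h₀ : ∀ t, ‖γ t - lam t‖ < η t := fun t => by simpa using hclose t 0 zero_le_one
  have h₁ : ∀ t, ‖deriv γ t - deriv lam t‖ < η t := fun t => by simpa using hclose t 1 le_rfl
  refine ⟨?_, ?_, fun t hγt => ?_⟩
  · exact injective_of_isStabilityRadius hlam (hγ.differentiable one_ne_zero) (fun t => (hη t).2)
      h₀ h₁
  · exact hlam_proper.of_dist_le hγ.continuous fun t =>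
      (dist_eq_norm _ _).trans_le ((h₀ t).le.trans (hη t).2.le_one)
  · have := h₁ t
    rw [hγt, zero_sub, norm_neg] at this
    exact this.not_ge (hη t).2.le_norm_deriv
end

section
/- Let n ≥ 2, let λ: ℝ → ℂⁿ be a proper C^∞ embedding, let K ⊂ ℂⁿ be compact, let ε > 0 and r ≥ 0 an integer. Let Z ⊂ ℝ be a finite set such that λ(t) ∈ ℂ × {0}^{n−1} for each t ∈ Z. Then there exist a vector v ∈ ℂⁿ with first coordinate 0 and an entire function h: ℂ → ℂ such that the shear Ψ(z) = z + h(z₁)v satisfies: (i) Ψ(ℂ × {0}^{n−1}) ∩ λ(ℝ) = λ(Z); (ii) |Ψ(z) − z| < ε for z ∈ K; and (iii) Ψ(z) = z + O(|z − λ(t)|^{r+1}) as z → λ(t), for every t ∈ Z. -/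
/-!
Take `v = e₂` and `h = c • p` with `p ζ = ∏_{t ∈ Z} (ζ - λ₁(t))^(r+1)`. The zeros of `p` of order
`r + 1` make `Ψ` fix the points `λ(Z)` to that order. A point `Ψ(ζ, 0) = (ζ, c p(ζ), 0, …)` with
`p ζ ≠ 0` lies on the curve only if `c = λ₂(x) / p(λ₁(x))` for some `x`; these values form the image
of a `C¹` curve in `ℂ ≅ ℝ²`, which has Hausdorff dimension at most one, so its complement is dense
and `c` can be chosen outside it and as small as needed on the compact set `K`.
-/

/-- The embedding `ℂ → ℂⁿ`, `ζ ↦ (ζ, 0, …, 0)`. -/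
noncomputable def embC (n : ℕ) (ζ : ℂ) : EuclideanSpace ℂ (Fin (n + 2)) :=
  EuclideanSpace.single 0 ζ


open Asymptotics Filter Topology Set Module

theorem dense_compl_image_of_contDiffAt {E F : Type*} [NormedAddCommGroup E] [NormedSpace ℝ E]
    [FiniteDimensional ℝ E] [NormedAddCommGroup F] [NormedSpace ℝ F] {f : E → F} {s : Set E}
    (hf : ∀ x ∈ s, ContDiffAt ℝ 1 f x) (hEF : finrank ℝ E < finrank ℝ F) :
    Dense (f '' s)ᶜ := by
  have : FiniteDimensional ℝ F := .of_finrank_pos (hEF.trans_le' (Nat.zero_le _))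
  refine dense_compl_of_dimH_lt_finrank ?_
  calc dimH (f '' s) ≤ dimH s := dimH_image_le_of_locally_lipschitzOn fun x hx => by
        obtain ⟨C, t, ht, hlip⟩ := (hf x hx).exists_lipschitzOnWith
        exact ⟨C, t, nhdsWithin_le_nhds ht, hlip⟩
    _ ≤ dimH (univ : Set E) := dimH_mono (subset_univ s)
    _ = finrank ℝ E := Real.dimH_univ_eq_finrank E
    _ < finrank ℝ F := by exact_mod_cast hEF

theorem dense_setOf_eq_mul_imp_eq_zero {b q : ℝ → ℂ} (hb : ContDiff ℝ 1 b) (hq : ContDiff ℝ 1 q) :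
    Dense {c : ℂ | ∀ x, b x = c * q x → q x = 0} := by
  have hdense := dense_compl_image_of_contDiffAt (f := fun x => b x * (q x)⁻¹)
    (s := {x | q x ≠ 0}) (fun x hx => hb.contDiffAt.mul (hq.contDiffAt.inv hx)) (by simp)
  refine hdense.mono fun c hc x hbx => ?_
  by_contra hqx
  exact hc ⟨x, hqx, by simp only [hbx, mul_inv_cancel_right₀ hqx]⟩

theorem IsCompact.eventually_forall_norm_smul_lt {X 𝕜 E : Type*} [TopologicalSpace X]
    [NormedField 𝕜] [SeminormedAddCommGroup E] [NormedSpace 𝕜 E] {K : Set X} (hK : IsCompact K)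
    {f : X → E} (hf : Continuous f) {ε : ℝ} (hε : 0 < ε) :
    ∀ᶠ c in 𝓝 (0 : 𝕜), ∀ x ∈ K, ‖c • f x‖ < ε :=
  hK.eventually_forall_of_forall_eventually fun x _ =>
    (continuous_fst.smul (hf.comp continuous_snd)).norm.continuousAt.eventually_lt
      continuousAt_const (by simpa using hε)

section VanishingProduct

variable {𝕜 : Type*} [NontriviallyNormedField 𝕜] (A : Finset 𝕜) (k : ℕ)

def vanishingProduct (x : 𝕜) : 𝕜 := ∏ a ∈ A, (x - a) ^ k

theorem differentiable_vanishingProduct : Differentiable 𝕜 (vanishingProduct A k) := by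
  unfold vanishingProduct
  fun_prop

variable {A k}

theorem vanishingProduct_eq_zero_iff (hk : k ≠ 0) {x : 𝕜} :
    vanishingProduct A k x = 0 ↔ x ∈ A := by
  simp [vanishingProduct, Finset.prod_eq_zero_iff, hk, sub_eq_zero]

theorem vanishingProduct_isBigO {a : 𝕜} (ha : a ∈ A) :
    vanishingProduct A k =O[𝓝 a] fun x => ‖x - a‖ ^ k := by
  classical
  have hsplit : vanishingProduct A k = fun x => (x - a) ^ k * ∏ b ∈ A.erase a, (x - b) ^ k :=
    funext fun x => (Finset.mul_prod_erase A (fun b => (x - b) ^ k) ha).symm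
  have hrest : Tendsto (fun x => ∏ b ∈ A.erase a, (x - b) ^ k) (𝓝 a) (𝓝 _) :=
    ((continuous_finsetProd _ fun b _ => (continuous_sub_right b).pow k).tendsto a)
  rw [hsplit]
  simpa using (isBigO_refl (fun x => (x - a) ^ k) (𝓝 a)).norm_right.mul (hrest.isBigO_one ℝ)

end VanishingProduct

theorem isBigO_apply_smul_const {ι : Type*} [Fintype ι] {h : ℂ → ℂ} {a : ℂ} {k : ℕ}
    (hh : h =O[𝓝 a] fun x => ‖x - a‖ ^ k) (i : ι) (v : EuclideanSpace ℂ ι)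
    {w : EuclideanSpace ℂ ι} (hw : w i = a) :
    (fun z : EuclideanSpace ℂ ι => h (z i) • v) =O[𝓝 w] fun z => ‖z - w‖ ^ k := by
  have hcoord : (fun z : EuclideanSpace ℂ ι => h (z i)) =O[𝓝 w] fun z => ‖z i - a‖ ^ k := by
    subst hw
    exact hh.comp_tendsto ((EuclideanSpace.proj i).continuous.tendsto w)
  have hproj : (fun z : EuclideanSpace ℂ ι => ‖z i - a‖ ^ k) =O[𝓝 w] fun z => ‖z - w‖ ^ k := by
    refine isBigO_of_le _ fun z => ?_
    rw [← hw]
    simpa using pow_le_pow_left₀ (norm_nonneg _) (PiLp.norm_apply_le (z - w) i) k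
  exact (isBigO_of_le' _ fun z => (norm_smul _ v).trans_le (mul_comm _ _).le).trans
    (hcoord.trans hproj)

section Line

variable {n : ℕ}

@[simp]
theorem embC_apply_zero (ζ : ℂ) : embC n ζ 0 = ζ := by simp [embC]

@[simp]
theorem embC_apply_one (ζ : ℂ) : embC n ζ 1 = 0 := by simp [embC]

theorem embC_apply_zero_of_mem_range {w : EuclideanSpace ℂ (Fin (n + 2))}
    (hw : w ∈ range (embC n)) : embC n (w 0) = w := by
  obtain ⟨ζ, rfl⟩ := hw
  rw [embC_apply_zero]

theorem shear_image_range_embC_inter_range {lam : ℝ → EuclideanSpace ℂ (Fin (n + 2))}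
    {Z : Set ℝ} {h : ℂ → ℂ} (hZ_line : ∀ t ∈ Z, lam t ∈ range (embC n))
    (h_vanish : ∀ t ∈ Z, h (lam t 0) = 0)
    (h_avoid : ∀ x, lam x 1 = h (lam x 0) → ∃ t ∈ Z, lam t 0 = lam x 0) :
    (fun z => z + h (z 0) • EuclideanSpace.single 1 1) '' range (embC n) ∩ range lam =
      lam '' Z := by
  ext z
  constructor
  · rintro ⟨⟨_, ⟨ζ, rfl⟩, rfl⟩, x, hx⟩
    have hx0 : lam x 0 = ζ := by simp [hx]
    have hx1 : lam x 1 = h ζ := by simp [hx]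
    obtain ⟨t, ht, hteq⟩ := h_avoid x (by rw [hx1, hx0])
    refine ⟨t, ht, ?_⟩
    dsimp only
    rw [embC_apply_zero, ← hx0, ← hteq, h_vanish t ht, zero_smul, add_zero,
      embC_apply_zero_of_mem_range (hZ_line t ht)]
  · rintro ⟨t, ht, rfl⟩
    refine ⟨⟨embC n (lam t 0), mem_range_self _, ?_⟩, mem_range_self t⟩
    simp [h_vanish t ht, embC_apply_zero_of_mem_range (hZ_line t ht)]

end Line

theorem shear_off_real_curve_general
    (n : ℕ)
    (lam : ℝ → EuclideanSpace ℂ (Fin (n + 2)))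
    (hlam_smooth : ContDiff ℝ (⊤ : ℕ∞) lam)
    (K : Set (EuclideanSpace ℂ (Fin (n + 2)))) (hK : IsCompact K)
    (ε : ℝ) (hε : 0 < ε) (r : ℕ)
    (Z : Set ℝ) (hZ_fin : Z.Finite)
    (hZ_line : ∀ t ∈ Z, lam t ∈ Set.range (embC n)) :
    ∃ (v : EuclideanSpace ℂ (Fin (n + 2))) (h : ℂ → ℂ)
      (Ψ : EuclideanSpace ℂ (Fin (n + 2)) → EuclideanSpace ℂ (Fin (n + 2))),
      v 0 = 0 ∧
      Differentiable ℂ h ∧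
      (∀ z, Ψ z = z + h (z 0) • v) ∧
      (Ψ '' Set.range (embC n) ∩ Set.range lam = lam '' Z) ∧
      (∀ z ∈ K, ‖Ψ z - z‖ < ε) ∧
      (∀ t ∈ Z, (fun z => Ψ z - z) =O[nhds (lam t)] fun z => ‖z - lam t‖ ^ (r + 1)) := by
  set v : EuclideanSpace ℂ (Fin (n + 2)) := EuclideanSpace.single 1 1
  set p := vanishingProduct (hZ_fin.toFinset.image fun t => lam t 0) (r + 1)
  have hp_zero (ζ : ℂ) : p ζ = 0 ↔ ∃ t ∈ Z, lam t 0 = ζ := by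
    simp [p, vanishingProduct_eq_zero_iff]
  have hlam_coord (i : Fin (n + 2)) : ContDiff ℝ 1 fun x => lam x i :=
    (contDiff_piLp 2).1 (hlam_smooth.of_le (by simp)) i
  have hp_diff : Differentiable ℂ p := differentiable_vanishingProduct _ _
  have hdir_cont : Continuous fun z : EuclideanSpace ℂ (Fin (n + 2)) => p (z 0) • v :=
    (hp_diff.continuous.comp (EuclideanSpace.proj 0).continuous).smul continuous_const
  obtain ⟨c, hc_avoid, hc_small⟩ := (dense_setOf_eq_mul_imp_eq_zero (hlam_coord 1)
    ((hp_diff.contDiff.restrict_scalars ℝ).comp (hlam_coord 0))).inter_nhds_nonempty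
    (hK.eventually_forall_norm_smul_lt hdir_cont hε)
  refine ⟨v, fun ζ => c * p ζ, fun z => z + (c * p (z 0)) • v, by simp [v],
    (differentiable_const c).mul hp_diff, fun _ => rfl,
    shear_image_range_embC_inter_range (h := fun ζ => c * p ζ) hZ_line (fun t ht => ?_)
      (fun x hx => ?_),
    fun z hz => ?_, fun t ht => ?_⟩
  · simp [(hp_zero _).2 ⟨t, ht, rfl⟩]
  · exact (hp_zero _).1 (hc_avoid x hx)
  · simpa [mul_smul] using hc_small z hz
  · simpa using isBigO_apply_smul_const
      ((vanishingProduct_isBigO (by simpa using ⟨t, ht, rfl⟩)).const_mul_left c) 0 v rfl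

/-- **Moving the complex line off a proper embedding of `ℝ` by a shear.**
Let `n ≥ 2` (here `ℂⁿ` is `ℂ^(n+2)`), `λ : ℝ → ℂⁿ` a proper `C^∞` embedding, `K ⊂ ℂⁿ`
compact, `ε > 0`, `r ≥ 0`, and `Z ⊂ ℝ` a finite set with `λ(t) ∈ ℂ × {0}^{n-1}` for
`t ∈ Z`.  Then there is a shear `Ψ(z) = z + h(z₁)v`, with `h` entire and `π₁ v = 0`,
such that (i) `Ψ(ℂ × {0}^{n-1}) ∩ λ(ℝ) = λ(Z)`, (ii) `|Ψ(z) − z| < ε` on `K`, and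
(iii) `Ψ(z) = z + O(|z − λ(t)|^{r+1})` as `z → λ(t)`, for every `t ∈ Z`. -/
theorem shear_off_real_curve
    (n : ℕ)
    (lam : ℝ → EuclideanSpace ℂ (Fin (n + 2)))
    (hlam_smooth : ContDiff ℝ (⊤ : ℕ∞) lam)
    (hlam_inj : Function.Injective lam)
    (hlam_proper : IsProperMap lam)
    (hlam_imm : ∀ t : ℝ, deriv lam t ≠ 0)
    (K : Set (EuclideanSpace ℂ (Fin (n + 2)))) (hK : IsCompact K)
    (ε : ℝ) (hε : 0 < ε) (r : ℕ)
    (Z : Set ℝ) (hZ_fin : Z.Finite)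
    (hZ_line : ∀ t ∈ Z, lam t ∈ Set.range (embC n)) :
    ∃ (v : EuclideanSpace ℂ (Fin (n + 2))) (h : ℂ → ℂ)
      (Ψ : EuclideanSpace ℂ (Fin (n + 2)) → EuclideanSpace ℂ (Fin (n + 2))),
      v 0 = 0 ∧
      Differentiable ℂ h ∧
      (∀ z, Ψ z = z + h (z 0) • v) ∧
      (Ψ '' Set.range (embC n) ∩ Set.range lam = lam '' Z) ∧
      (∀ z ∈ K, ‖Ψ z - z‖ < ε) ∧
      (∀ t ∈ Z, (fun z => Ψ z - z) =O[nhds (lam t)] fun z => ‖z - lam t‖ ^ (r + 1)) :=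
  shear_off_real_curve_general n lam hlam_smooth K hK ε hε r Z hZ_fin hZ_line
end

section
/- Let n ≥ 2 and for each j ≥ 1 let Ψ_j be a shear of ℂⁿ of the form Ψ_j(z) = z + g_j(z₁)e₂ + h_j(z₁)v_j, where g_j, h_j are entire functions on ℂ and v_j ∈ ℂⁿ has first coordinate 0. Suppose there are numbers ε_j > 0 with ε_j < 2^{−j} such that |Ψ_j(z) − z| < ε_j whenever |z| ≤ j. Then the compositions Ψ₁ ∘ Ψ₂ ∘ … ∘ Ψ_k satisfy Ψ₁ ∘ … ∘ Ψ_k(z) = z + Σ_{j=1}^{k} (g_j(z₁)e₂ + h_j(z₁)v_j), and they converge uniformly on compact subsets of ℂⁿ as k → ∞ to a holomorphic automorphism Ψ of ℂⁿ of the form Ψ(z) = z + G(z₁) for some holomorphic map G: ℂ → {0} × ℂ^{n−1}. -/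
/-!
Every `Ψ_j` is a map `z ↦ z + A_j(z₁)` whose increment `A_j` has vanishing first coordinate, so
`Ψ_j` preserves `z₁` and such maps compose by adding their increments. Testing the smallness
hypothesis at `z = (ζ, 0, …, 0)` gives `|A_j(ζ)| < 2^{-j}` for `|ζ| ≤ j`; hence on every bounded
set the series `∑ A_j` is eventually dominated by a geometric series and converges uniformly.
Its sum `G` is entire by Weierstrass' theorem, still has vanishing first coordinate, and
`z ↦ z - G(z₁)` inverts `z ↦ z + G(z₁)`.
-/

/-- The composition `Ψ₁ ∘ Ψ₂ ∘ ⋯ ∘ Ψ_k` of a sequence of self-maps (indexed from `1`);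
for `k = 0` it is the identity. -/
def compSeq {α : Type*} (Ψ : ℕ → α → α) : ℕ → α → α
  | 0 => id
  | k + 1 => compSeq Ψ k ∘ Ψ (k + 1)

open Filter Finset Function

section Shear

variable {E B : Type*}

/-- A shear when `p` is a projection and `G` takes values in `ker p`. -/
def shearMap [Add E] (p : E → B) (G : B → E) (z : E) : E :=
  z + G (p z)

theorem compSeq_shearMap [AddCommMonoid E] {p : E → B} {A : ℕ → B → E}
    (hA : ∀ j, 1 ≤ j → ∀ z b, p (z + A j b) = p z) {Ψ : ℕ → E → E}
    (hΨ : ∀ j, 1 ≤ j → Ψ j = shearMap p (A j)) (k : ℕ) :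
    compSeq Ψ k = shearMap p (fun b => ∑ j ∈ Icc 1 k, A j b) := by
  induction k with
  | zero => funext z; simp [compSeq, shearMap]
  | succ k ih =>
    funext z
    have hk : 1 ≤ k + 1 := Nat.le_add_left 1 k
    simp only [compSeq, comp_apply, ih, hΨ (k + 1) hk, shearMap, hA (k + 1) hk,
      sum_Icc_succ_top hk]
    abel

section AddCommGroup

variable [AddCommGroup E] {p : E → B} {G : B → E}

theorem map_sub_of_map_add (hG : ∀ z b, p (z + G b) = p z) (z : E) (b : B) :
    p (z - G b) = p z := by
  simpa using (hG (z - G b) b).symm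

theorem shearMap_neg_leftInverse (hG : ∀ z b, p (z + G b) = p z) :
    LeftInverse (shearMap p (-G)) (shearMap p G) := fun z => by
  simp [shearMap, hG]

theorem shearMap_neg_rightInverse (hG : ∀ z b, p (z + G b) = p z) :
    RightInverse (shearMap p (-G)) (shearMap p G) := fun z => by
  simp [shearMap, ← sub_eq_add_neg, map_sub_of_map_add hG]

end AddCommGroup

theorem differentiable_shearMap {𝕜 : Type*} [NontriviallyNormedField 𝕜] [NormedAddCommGroup E]
    [NormedSpace 𝕜 E] [NormedAddCommGroup B] [NormedSpace 𝕜 B] {p : E → B} {G : B → E}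
    (hp : Differentiable 𝕜 p) (hG : Differentiable 𝕜 G) : Differentiable 𝕜 (shearMap p G) :=
  differentiable_id.add (hG.comp hp)

theorem tendstoUniformlyOn_shearMap [SeminormedAddCommGroup E] {ι : Type*} {l : Filter ι}
    {p : E → B} {S : ι → B → E} {G : B → E} {K : Set E}
    (h : TendstoUniformlyOn S G l (p '' K)) :
    TendstoUniformlyOn (fun i => shearMap p (S i)) (shearMap p G) l K := by
  rw [Metric.tendstoUniformlyOn_iff] at h ⊢
  intro δ hδ
  filter_upwards [h δ hδ] with i hi z hz
  simpa [shearMap, dist_add_left] using hi (p z) (Set.mem_image_of_mem p hz)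

end Shear

section Series

variable {X F : Type*} [SeminormedAddCommGroup X] [NormedAddCommGroup F] [CompleteSpace F]

theorem tendstoUniformlyOn_tsum_nat_of_norm_le {f : ℕ → X → F} {u : ℕ → ℝ} (hu : Summable u)
    (hfu : ∀ (n : ℕ) x, ‖x‖ ≤ n → ‖f n x‖ ≤ u n) {s : Set X} (hs : Bornology.IsBounded s) :
    TendstoUniformlyOn (fun N x => ∑ n ∈ range N, f n x) (fun x => ∑' n, f n x) atTop s := by
  obtain ⟨R, hR⟩ := hs.subset_closedBall 0
  refine tendstoUniformlyOn_tsum_nat_eventually hu ?_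
  filter_upwards [eventually_ge_atTop ⌈R⌉₊] with n hn x hx
  exact hfu n x <| (mem_closedBall_zero_iff.mp (hR hx)).trans <|
    (Nat.le_ceil R).trans (by exact_mod_cast hn)

theorem differentiable_tsum_of_norm_le [NormedSpace ℂ F] {f : ℕ → ℂ → F} {u : ℕ → ℝ}
    (hf : ∀ n, Differentiable ℂ (f n)) (hu : Summable u)
    (hfu : ∀ (n : ℕ) ζ, ‖ζ‖ ≤ n → ‖f n ζ‖ ≤ u n) :
    Differentiable ℂ (fun ζ => ∑' n, f n ζ) := by
  have hloc : TendstoLocallyUniformlyOn (fun N ζ => ∑ n ∈ range N, f n ζ)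
      (fun ζ => ∑' n, f n ζ) atTop Set.univ :=
    (tendstoLocallyUniformlyOn_iff_forall_isCompact isOpen_univ).mpr fun K _ hK =>
      tendstoUniformlyOn_tsum_nat_of_norm_le hu hfu hK.isBounded
  rw [← differentiableOn_univ]
  exact hloc.differentiableOn (Eventually.of_forall fun N =>
    (Differentiable.fun_sum fun n _ => hf n).differentiableOn) isOpen_univ

end Series

theorem ContinuousLinearMap.map_tsum_eq_zero {ι R M N : Type*} [Semiring R] [AddCommMonoid M]
    [TopologicalSpace M] [Module R M] [AddCommMonoid N] [TopologicalSpace N] [T2Space N]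
    [Module R N] (φ : M →L[R] N) {f : ι → M} (hf : ∀ i, φ (f i) = 0) : φ (∑' i, f i) = 0 := by
  by_cases hs : Summable f
  · simp [φ.map_tsum hs, hf]
  · simp [tsum_eq_zero_of_not_summable hs]

theorem EuclideanSpace.norm_lt_of_norm_shearMap_sub_lt {𝕜 ι : Type*} [RCLike 𝕜] [Fintype ι]
    [DecidableEq ι] (i : ι) {A : 𝕜 → EuclideanSpace 𝕜 ι} {R c : ℝ}
    (h : ∀ z : EuclideanSpace 𝕜 ι, ‖z‖ ≤ R → ‖shearMap (· i) A z - z‖ < c) {ζ : 𝕜}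
    (hζ : ‖ζ‖ ≤ R) : ‖A ζ‖ < c := by
  simpa [shearMap] using h (EuclideanSpace.single i ζ) (by rwa [PiLp.norm_single])

open Filter in
theorem shear_compositions_converge_general
    (n : ℕ)
    (g h : ℕ → ℂ → ℂ)
    (v : ℕ → EuclideanSpace ℂ (Fin (n + 2)))
    (Ψ : ℕ → EuclideanSpace ℂ (Fin (n + 2)) → EuclideanSpace ℂ (Fin (n + 2)))
    (hg : ∀ j, 1 ≤ j → Differentiable ℂ (g j))
    (hh : ∀ j, 1 ≤ j → Differentiable ℂ (h j))
    (hv : ∀ j, 1 ≤ j → v j 0 = 0)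
    (hΨ : ∀ j, 1 ≤ j → ∀ z, Ψ j z =
      z + g j (z 0) • EuclideanSpace.single 1 (1 : ℂ) + h j (z 0) • v j)
    (ε : ℕ → ℝ)
    (hε_lt : ∀ j, 1 ≤ j → ε j < ((1 : ℝ) / 2) ^ j)
    (hsmall : ∀ j : ℕ, 1 ≤ j → ∀ z : EuclideanSpace ℂ (Fin (n + 2)),
      ‖z‖ ≤ (j : ℝ) → ‖Ψ j z - z‖ < ε j) :
    (∀ k : ℕ, ∀ z : EuclideanSpace ℂ (Fin (n + 2)),
      compSeq Ψ k z = z + ∑ j ∈ Finset.Icc 1 k,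
        (g j (z 0) • EuclideanSpace.single 1 (1 : ℂ) + h j (z 0) • v j)) ∧
    ∃ G : ℂ → EuclideanSpace ℂ (Fin (n + 2)),
      Differentiable ℂ G ∧
      (∀ ζ : ℂ, G ζ 0 = 0) ∧
      (∀ K : Set (EuclideanSpace ℂ (Fin (n + 2))), IsCompact K →
        TendstoUniformlyOn (fun k => compSeq Ψ k) (fun z => z + G (z 0)) atTop K) ∧
      ∃ Ψinv : EuclideanSpace ℂ (Fin (n + 2)) → EuclideanSpace ℂ (Fin (n + 2)),
        Differentiable ℂ (fun z : EuclideanSpace ℂ (Fin (n + 2)) => z + G (z 0)) ∧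
        Differentiable ℂ Ψinv ∧
        Function.LeftInverse Ψinv (fun z => z + G (z 0)) ∧
        Function.RightInverse Ψinv (fun z => z + G (z 0)) := by
  set A : ℕ → ℂ → EuclideanSpace ℂ (Fin (n + 2)) :=
    fun j ζ => g j ζ • EuclideanSpace.single 1 (1 : ℂ) + h j ζ • v j
  have hA0 : ∀ j, 1 ≤ j → ∀ ζ, A j ζ 0 = 0 := fun j hj ζ => by simp [A, hv j hj]
  have hΨA : ∀ j, 1 ≤ j → Ψ j = shearMap (· 0) (A j) := fun j hj =>
    funext fun z => by rw [hΨ j hj z, shearMap, add_assoc]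
  have hcomp := compSeq_shearMap (fun j hj z ζ => by simp [hA0 j hj]) hΨA
  have hbound : ∀ (m : ℕ) (ζ : ℂ), ‖ζ‖ ≤ m → ‖A (m + 1) ζ‖ ≤ (1 / 2) ^ m := fun m ζ hζ => by
    have hm : 1 ≤ m + 1 := Nat.le_add_left 1 m
    have hsmall' := hΨA (m + 1) hm ▸ hsmall (m + 1) hm
    calc ‖A (m + 1) ζ‖ ≤ ε (m + 1) :=
          (EuclideanSpace.norm_lt_of_norm_shearMap_sub_lt 0 hsmall' (by push_cast; linarith)).le
      _ ≤ (1 / 2) ^ m := (hε_lt (m + 1) hm).le.trans (pow_le_pow_of_le_one (by norm_num)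
          (by norm_num) (Nat.le_succ m))
  have hpartial : ∀ k ζ, ∑ j ∈ Icc 1 k, A j ζ = ∑ m ∈ range k, A (m + 1) ζ := fun k ζ => by
    rw [← Ico_add_one_right_eq_Icc, sum_Ico_eq_sum_range]
    simp [add_comm]
  set G : ℂ → EuclideanSpace ℂ (Fin (n + 2)) := fun ζ => ∑' m, A (m + 1) ζ
  have hG0 : ∀ ζ, G ζ 0 = 0 := fun ζ =>
    (EuclideanSpace.proj 0).map_tsum_eq_zero fun m => hA0 (m + 1) (Nat.le_add_left 1 m) ζ
  have hGp : ∀ z ζ, (z + G ζ) 0 = z 0 := fun z ζ => by simp [hG0]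
  have hproj : Differentiable ℂ (fun z : EuclideanSpace ℂ (Fin (n + 2)) => z 0) := by fun_prop
  have hGdiff : Differentiable ℂ G := differentiable_tsum_of_norm_le
    (fun m => ((hg _ (Nat.le_add_left 1 m)).smul_const _).add
      ((hh _ (Nat.le_add_left 1 m)).smul_const _)) summable_geometric_two hbound
  refine ⟨fun k z => congrFun (hcomp k) z, G, hGdiff, hG0, fun K hK => ?_,
    shearMap (· 0) (-G), differentiable_shearMap hproj hGdiff,
    differentiable_shearMap hproj hGdiff.neg, shearMap_neg_leftInverse hGp,
    shearMap_neg_rightInverse hGp⟩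
  simp only [hcomp, hpartial]
  exact tendstoUniformlyOn_shearMap (tendstoUniformlyOn_tsum_nat_of_norm_le summable_geometric_two
    hbound (hK.image (EuclideanSpace.proj 0).continuous).isBounded)

open Filter in
/-- **Convergence of compositions of shears to an automorphism.**
Let `n ≥ 2` (here `ℂⁿ` is `ℂ^(n+2)`) and for `j ≥ 1` let `Ψ_j(z) = z + g_j(z₁)e₂ + h_j(z₁)v_j`
be shears with `g_j, h_j` entire and `π₁ v_j = 0`.  If `|Ψ_j(z) − z| < ε_j < 2^{−j}`
for `|z| ≤ j`, then `Ψ₁ ∘ ⋯ ∘ Ψ_k (z) = z + Σ_{j=1}^k (g_j(z₁)e₂ + h_j(z₁)v_j)`, and the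
compositions converge uniformly on compact sets to a holomorphic automorphism
`Ψ(z) = z + G(z₁)` with `G : ℂ → {0} × ℂ^{n-1}` holomorphic. -/
theorem shear_compositions_converge
    (n : ℕ)
    (g h : ℕ → ℂ → ℂ)
    (v : ℕ → EuclideanSpace ℂ (Fin (n + 2)))
    (Ψ : ℕ → EuclideanSpace ℂ (Fin (n + 2)) → EuclideanSpace ℂ (Fin (n + 2)))
    (hg : ∀ j, 1 ≤ j → Differentiable ℂ (g j))
    (hh : ∀ j, 1 ≤ j → Differentiable ℂ (h j))
    (hv : ∀ j, 1 ≤ j → v j 0 = 0)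
    (hΨ : ∀ j, 1 ≤ j → ∀ z, Ψ j z =
      z + g j (z 0) • EuclideanSpace.single 1 (1 : ℂ) + h j (z 0) • v j)
    (ε : ℕ → ℝ)
    (hε_pos : ∀ j, 1 ≤ j → 0 < ε j)
    (hε_lt : ∀ j, 1 ≤ j → ε j < ((1 : ℝ) / 2) ^ j)
    (hsmall : ∀ j : ℕ, 1 ≤ j → ∀ z : EuclideanSpace ℂ (Fin (n + 2)),
      ‖z‖ ≤ (j : ℝ) → ‖Ψ j z - z‖ < ε j) :
    (∀ k : ℕ, ∀ z : EuclideanSpace ℂ (Fin (n + 2)),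
      compSeq Ψ k z = z + ∑ j ∈ Finset.Icc 1 k,
        (g j (z 0) • EuclideanSpace.single 1 (1 : ℂ) + h j (z 0) • v j)) ∧
    ∃ G : ℂ → EuclideanSpace ℂ (Fin (n + 2)),
      Differentiable ℂ G ∧
      (∀ ζ : ℂ, G ζ 0 = 0) ∧
      (∀ K : Set (EuclideanSpace ℂ (Fin (n + 2))), IsCompact K →
        TendstoUniformlyOn (fun k => compSeq Ψ k) (fun z => z + G (z 0)) atTop K) ∧
      ∃ Ψinv : EuclideanSpace ℂ (Fin (n + 2)) → EuclideanSpace ℂ (Fin (n + 2)),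
        Differentiable ℂ (fun z : EuclideanSpace ℂ (Fin (n + 2)) => z + G (z 0)) ∧
        Differentiable ℂ Ψinv ∧
        Function.LeftInverse Ψinv (fun z => z + G (z 0)) ∧
        Function.RightInverse Ψinv (fun z => z + G (z 0)) :=
  shear_compositions_converge_general n g h v Ψ hg hh hv hΨ ε hε_lt hsmall
end

section
/- Let n ≥ 2, let λ: ℝ → ℂⁿ be a proper C^∞ embedding, let r ≥ 0 be an integer, and let Z = {t₁, …, t_s} ⊂ ℝ be a finite set with λ(t_j) ∈ ℂ × {0}^{n−1} for each j. Let h(ζ) = Π_{j=1}^{s} (ζ − π₁λ(t_j))^{r+1}, where π₁ is projection to the first coordinate, and define Φ: ℂ × ℂ^{n−1} → ℂⁿ by Φ(z₁, α) = (z₁, 0, …, 0) + h(z₁)(0, α). Then for Lebesgue-almost every α ∈ ℂ^{n−1}, the set {Φ(z₁, α) : z₁ ∈ ℂ} intersects λ(ℝ) exactly in λ(Z). -/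
/-- The inclusion `ℂ^{n-1} → ℂⁿ`, `α ↦ (0, α)`. -/
def padC (n : ℕ) (α : Fin (n + 1) → ℂ) : EuclideanSpace ℂ (Fin (n + 2)) :=
  WithLp.toLp 2 (Fin.cons 0 α : Fin (n + 2) → ℂ)

open MeasureTheory Module Set

theorem MeasureTheory.addHaar_image_eq_zero_of_differentiableOn_of_one_lt_finrank
    {E : Type*} [NormedAddCommGroup E] [NormedSpace ℝ E] [MeasurableSpace E] [BorelSpace E]
    [FiniteDimensional ℝ E] (μ : Measure E) [μ.IsAddHaarMeasure] (hE : 1 < finrank ℝ E)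
    {f : ℝ → E} {s : Set ℝ} (hf : DifferentiableOn ℝ f s) : μ (f '' s) = 0 := by
  have : Nontrivial E := (finrank_pos_iff (R := ℝ)).mp (by omega)
  obtain ⟨v, hv⟩ := exists_ne (0 : E)
  obtain ⟨φ, -, hφv⟩ := exists_dual_vector ℝ v (norm_ne_zero_iff.mpr hv)
  set ℓ : E →L[ℝ] ℝ := ‖v‖⁻¹ • φ
  have hℓ : ∀ t : ℝ, ℓ (t • v) = t := fun t => by
    simp [ℓ, hφv, norm_ne_zero_iff.mpr hv]
  have hline : μ (Submodule.span ℝ {v}) = 0 := by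
    refine Measure.addHaar_submodule μ _ fun htop => ?_
    have := finrank_span_singleton (K := ℝ) hv
    rw [htop, finrank_top] at this
    omega
  have hsub : f '' s ⊆ (f ∘ ℓ) '' ((· • v) '' s) := by
    rintro _ ⟨t, ht, rfl⟩
    exact ⟨t • v, mem_image_of_mem _ ht, by simp [hℓ]⟩
  refine measure_mono_null hsub (addHaar_image_eq_zero_of_differentiableOn_of_addHaar_eq_zero μ
    (hf.comp ℓ.differentiableOn ?_) (measure_mono_null ?_ hline))
  · rintro _ ⟨t, ht, rfl⟩
    simpa [hℓ] using ht
  · rintro _ ⟨t, -, rfl⟩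
    exact Submodule.smul_mem _ t (Submodule.mem_span_singleton_self v)

section Shear

variable {n : ℕ}

theorem embC_add_smul_padC_eq_iff {z c : ℂ} {α : Fin (n + 1) → ℂ}
    {x : EuclideanSpace ℂ (Fin (n + 2))} :
    embC n z + c • padC n α = x ↔ z = x 0 ∧ ∀ i : Fin (n + 1), x i.succ = c * α i := by
  constructor
  · rintro rfl
    simp [embC, padC, Fin.succ_ne_zero]
  · rintro ⟨rfl, hsucc⟩
    ext j
    refine Fin.cases ?_ (fun i => ?_) j
    · simp [embC, padC]
    · simp [embC, padC, Fin.succ_ne_zero, hsucc]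

theorem embC_apply_zero_eq_iff {x : EuclideanSpace ℂ (Fin (n + 2))} :
    embC n (x 0) = x ↔ ∀ i : Fin (n + 1), x i.succ = 0 := by
  simpa using embC_add_smul_padC_eq_iff (z := x 0) (c := 0) (α := 0) (x := x)

theorem mem_range_embC_iff {x : EuclideanSpace ℂ (Fin (n + 2))} :
    x ∈ range (embC n) ↔ ∀ i : Fin (n + 1), x i.succ = 0 := by
  refine ⟨?_, fun h => ⟨_, embC_apply_zero_eq_iff.mpr h⟩⟩
  rintro ⟨z, rfl⟩ i
  simp [embC, Fin.succ_ne_zero]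

variable {lam : ℝ → EuclideanSpace ℂ (Fin (n + 2))} {Z : Finset ℝ} {h : ℂ → ℂ}

theorem range_shear_inter_range_eq
    (hZ : ∀ t ∈ Z, lam t ∈ range (embC n)) (hzero : ∀ z, h z = 0 ↔ ∃ t ∈ Z, z = lam t 0)
    {α : Fin (n + 1) → ℂ}
    (hα : ∀ t, h (lam t 0) ≠ 0 → (fun i => lam t i.succ / h (lam t 0)) ≠ α) :
    (range fun z => embC n z + h z • padC n α) ∩ range lam = lam '' Z := by
  ext x
  constructor
  · rintro ⟨⟨z, hz⟩, t, rfl⟩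
    obtain ⟨rfl, hsucc⟩ := embC_add_smul_padC_eq_iff.mp hz
    by_cases ht : h (lam t 0) = 0
    · obtain ⟨t', ht', hfirst⟩ := (hzero _).mp ht
      have hline : lam t = embC n (lam t 0) :=
        (embC_apply_zero_eq_iff.mpr fun i => by rw [hsucc i, ht, zero_mul]).symm
      rw [hline, hfirst, embC_apply_zero_eq_iff.mpr (mem_range_embC_iff.mp (hZ t' ht'))]
      exact mem_image_of_mem lam ht'
    · exact absurd (funext fun i => by rw [hsucc i, mul_div_cancel_left₀ _ ht]) (hα t ht)
  · rintro ⟨t, ht, rfl⟩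
    have hvanish : h (lam t 0) = 0 := (hzero _).mpr ⟨t, ht, rfl⟩
    refine ⟨⟨lam t 0, embC_add_smul_padC_eq_iff.mpr ⟨rfl, fun i => ?_⟩⟩, t, rfl⟩
    rw [hvanish, zero_mul, mem_range_embC_iff.mp (hZ t ht)]

theorem ae_range_shear_inter_range_eq (hlam : Differentiable ℝ lam)
    (hZ : ∀ t ∈ Z, lam t ∈ range (embC n))
    (hh : Differentiable ℂ h) (hzero : ∀ z, h z = 0 ↔ ∃ t ∈ Z, z = lam t 0) :
    ∀ᵐ α : Fin (n + 1) → ℂ,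
      (range fun z => embC n z + h z • padC n α) ∩ range lam = lam '' Z := by
  set γ : ℝ → Fin (n + 1) → ℂ := fun t i => lam t i.succ / h (lam t 0)
  have hcoord : ∀ j, Differentiable ℝ fun t => lam t j := fun j =>
    ((EuclideanSpace.proj j : EuclideanSpace ℂ (Fin (n + 2)) →L[ℂ] ℂ).restrictScalars ℝ
      ).differentiable.comp hlam
  have hγ : DifferentiableOn ℝ γ {t | h (lam t 0) ≠ 0} :=
    differentiableOn_pi.mpr fun i => (hcoord i.succ).differentiableOn.div
      ((hh.restrictScalars ℝ).comp (hcoord 0)).differentiableOn fun _ ht => ht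
  have hnull := addHaar_image_eq_zero_of_differentiableOn_of_one_lt_finrank volume
    (by simp [finrank_pi_fintype]; omega) hγ
  refine measure_mono_null (fun α hα => ?_) hnull
  by_contra hbad
  exact hα (range_shear_inter_range_eq hZ hzero fun t ht hγt => hbad ⟨t, ht, hγt⟩)

end Shear

open MeasureTheory in
theorem generic_shear_line_meets_curve_only_in_Z_general
    (n : ℕ)
    (lam : ℝ → EuclideanSpace ℂ (Fin (n + 2)))
    (hlam_smooth : ContDiff ℝ (⊤ : ℕ∞) lam)
    (r : ℕ)
    (Z : Finset ℝ)
    (hZ_line : ∀ t ∈ Z, lam t ∈ Set.range (embC n)) :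
    ∀ᵐ α : Fin (n + 1) → ℂ,
      (Set.range fun z₁ : ℂ =>
          embC n z₁ + (∏ t ∈ Z, (z₁ - lam t 0) ^ (r + 1)) • padC n α)
        ∩ Set.range lam = lam '' (Z : Set ℝ) := by
  refine ae_range_shear_inter_range_eq (h := fun z => ∏ t ∈ Z, (z - lam t 0) ^ (r + 1))
    (hlam_smooth.differentiable (by simp)) hZ_line (by fun_prop) fun z => ?_
  simp [Finset.prod_eq_zero_iff, sub_eq_zero]

open MeasureTheory in
/-- **Generic perturbations of the line miss a proper embedding of `ℝ` outside `λ(Z)`.**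
Let `n ≥ 2` (here `ℂⁿ` is `ℂ^(n+2)`), `λ : ℝ → ℂⁿ` a proper `C^∞` embedding, `r ≥ 0`,
and `Z ⊂ ℝ` finite with `λ(t) ∈ ℂ × {0}^{n-1}` for `t ∈ Z`.  With
`h(ζ) = Π_{t ∈ Z} (ζ − π₁λ(t))^{r+1}` and `Φ(z₁, α) = (z₁, 0, …, 0) + h(z₁)(0, α)`,
for Lebesgue-almost every `α ∈ ℂ^{n-1}` the set `{Φ(z₁, α) : z₁ ∈ ℂ}` intersects `λ(ℝ)`
exactly in `λ(Z)`. -/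
theorem generic_shear_line_meets_curve_only_in_Z
    (n : ℕ)
    (lam : ℝ → EuclideanSpace ℂ (Fin (n + 2)))
    (hlam_smooth : ContDiff ℝ (⊤ : ℕ∞) lam)
    (hlam_inj : Function.Injective lam)
    (hlam_proper : IsProperMap lam)
    (hlam_imm : ∀ t : ℝ, deriv lam t ≠ 0)
    (r : ℕ)
    (Z : Finset ℝ)
    (hZ_line : ∀ t ∈ Z, lam t ∈ Set.range (embC n)) :
    ∀ᵐ α : Fin (n + 1) → ℂ,
      (Set.range fun z₁ : ℂ =>
          embC n z₁ + (∏ t ∈ Z, (z₁ - lam t 0) ^ (r + 1)) • padC n α)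
        ∩ Set.range lam = lam '' (Z : Set ℝ) :=
  generic_shear_line_meets_curve_only_in_Z_general n lam hlam_smooth r Z hZ_line
end
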